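/- Let G be a topological group, K a compact subgroup of G with normalized Haar measure, and f : G → ℂ an integrable function that is invariant under right translation by elements of K (i.e. f(xk) = f(x) for all x ∈ G, k ∈ K). If χ : G → ℂ is a continuous character whose restriction to K is nontrivial, then ∫_G f(x)·χ(x) dμ(x) = 0, where μ is a Haar measure on G. -/

import Mathlib

open MeasureTheory

/-- Vanishing of Fourier coefficients at ramified characters: if `f` is an
integrable function on a locally compact abelian group `G` invariant under
right translation by a compact subgroup `K`, and `χ` is a continuous unitary
character of `G` whose restriction to `K` is nontrivial, then
`∫_G f(x) χ(x) dμ(x) = 0` for a Haar measure `μ` on `G`. -/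
theorem integral_eq_zero_of_ramified_character
    {G : Type*} [CommGroup G] [TopologicalSpace G] [IsTopologicalGroup G]
    [MeasurableSpace G] [BorelSpace G]
    (μ : Measure G) [μ.IsHaarMeasure]
    (K : Subgroup G) (hK : IsCompact (K : Set G))
    (f : G → ℂ) (hf : Integrable f μ)
    (hinv : ∀ x : G, ∀ k ∈ K, f (x * k) = f x)
    (χ : G →* ℂ) (hχ : Continuous χ) (hunit : ∀ x, ‖χ x‖ = 1)
    (hram : ∃ k ∈ K, χ k ≠ 1) :
    ∫ x, f x * χ x ∂μ = 0 := by
  obtain ⟨k, hk, hχk⟩ := hram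
  have key : ∫ x, f x * χ x ∂μ = (∫ x, f x * χ x ∂μ) * χ k := by
    conv_lhs => rw [← MeasureTheory.integral_mul_right_eq_self (fun x => f x * χ x) k]
    simp_rw [hinv _ k hk, map_mul, ← mul_assoc]
    rw [integral_mul_const]
  have h0 : (∫ x, f x * χ x ∂μ) * (1 - χ k) = 0 := by
    rw [mul_one_sub, ← key, sub_self]
  rcases mul_eq_zero.mp h0 with h | h
  · exact h
  · exact absurd (sub_eq_zero.mp h).symm hχk
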